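/- arXiv:0903.4987 — 3 statements merged into one kernel-verified Lean document; each statement's English description precedes it below -/
import Mathlib

section
/- Let φ be an 𝔖∞-central state on G = Γ≀𝔖∞ with GNS triple (π, H, ξ). For k = 1, 2 let φ_k be a positive normal functional on π(G)″; concretely, assume there are sequences (x_n^{(k)})_{n∈ℕ} in H with Σ_n ‖x_n^{(k)}‖² < ∞ such that φ_k(a) = Σ_n ⟨a x_n^{(k)}, x_n^{(k)}⟩ for every a ∈ π(G)″. Assume: (i) φ_k(π(s)·a) = φ_k(a·π(s)) for every s ∈ 𝔖∞ and every a ∈ π(G)″ (k = 1, 2); and (ii) φ₁(c) = φ₂(c) for every c in the center π(G)″ ∩ π(G)′. Then φ₁(π(g)) = φ₂(π(g)) for every g ∈ G. -/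
open scoped Classical ComplexOrder
open Filter Topology

noncomputable section

namespace DN

local notation "⟪" x ", " y "⟫" => @inner ℂ _ _ x y

/-- The group `𝔖∞` of finitely supported permutations of `ℕ`. -/
def SInf : Subgroup (Equiv.Perm ℕ) where
  carrier := {s | {i | s i ≠ i}.Finite}
  one_mem' := by simp
  mul_mem' := by
    intro s t hs ht
    refine Set.Finite.subset (hs.union ht) fun i hi => ?_
    simp only [Set.mem_setOf_eq, Set.mem_union, Equiv.Perm.mul_apply] at hi ⊢
    by_contra h
    push_neg at h
    rw [h.2, h.1] at hi
    exact hi rfl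
  inv_mem' := by
    intro s hs
    refine Set.Finite.subset hs fun i hi => ?_
    simp only [Set.mem_setOf_eq] at hi ⊢
    intro h
    exact hi (Equiv.Perm.inv_eq_iff_eq.mpr h.symm)

theorem mem_SInf (s : Equiv.Perm ℕ) : s ∈ SInf ↔ {i | s i ≠ i}.Finite := Iff.rfl

/-- The group `Γ^∞_e` of finitely supported sequences in `Γ`. -/
def GammaE (Γ : Type*) [Group Γ] : Subgroup (ℕ → Γ) where
  carrier := {γ | {i | γ i ≠ 1}.Finite}
  one_mem' := by simp
  mul_mem' := by
    intro f g hf hg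
    refine Set.Finite.subset (hf.union hg) fun i hi => ?_
    simp only [Set.mem_setOf_eq, Set.mem_union, Pi.mul_apply] at hi ⊢
    by_contra h
    push_neg at h
    rw [h.1, h.2] at hi
    exact hi (one_mul 1)
  inv_mem' := by
    intro f hf
    refine Set.Finite.subset hf fun i hi => ?_
    simp only [Set.mem_setOf_eq, Pi.inv_apply, ne_eq, inv_eq_one] at hi ⊢
    exact hi

theorem mem_GammaE {Γ : Type*} [Group Γ] (γ : ℕ → Γ) :
    γ ∈ GammaE Γ ↔ {i | γ i ≠ 1}.Finite := Iff.rfl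

/-- The permutation action of `Equiv.Perm ℕ` on `ℕ → Γ`. -/
def permMulAut (Γ : Type*) [Group Γ] (s : Equiv.Perm ℕ) : MulAut (ℕ → Γ) where
  toFun γ := γ ∘ s.symm
  invFun γ := γ ∘ s
  left_inv γ := by funext i; simp [Function.comp]
  right_inv γ := by funext i; simp [Function.comp]
  map_mul' γ δ := rfl

def permAction (Γ : Type*) [Group Γ] : Equiv.Perm ℕ →* MulAut (ℕ → Γ) where
  toFun := permMulAut Γ
  map_one' := by ext γ i; rfl
  map_mul' s t := by ext γ i; rfl

/-- The (big) wreath product `(ℕ → Γ) ⋊ Perm ℕ`. -/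
abbrev W (Γ : Type*) [Group Γ] := (ℕ → Γ) ⋊[permAction Γ] Equiv.Perm ℕ

/-- The wreath product `G = Γ ≀ 𝔖∞`, as the subgroup of `W Γ` of finitely
supported elements. -/
def WG (Γ : Type*) [Group Γ] : Subgroup (W Γ) where
  carrier := {g | {i | g.right i ≠ i}.Finite ∧ {i | g.left i ≠ 1}.Finite}
  one_mem' := by
    constructor
    · convert Set.finite_empty using 1
      ext i; simp
    · convert Set.finite_empty using 1
      ext i; simp
  mul_mem' := by
    rintro a b ⟨ha1, ha2⟩ ⟨hb1, hb2⟩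
    constructor
    · refine Set.Finite.subset (ha1.union hb1) fun i hi => ?_
      simp only [Set.mem_setOf_eq, Set.mem_union, SemidirectProduct.mul_right,
        Equiv.Perm.mul_apply] at hi ⊢
      by_contra h
      push_neg at h
      rw [h.2, h.1] at hi
      exact hi rfl
    · refine Set.Finite.subset (ha2.union (hb2.image a.right)) fun i hi => ?_
      simp only [Set.mem_setOf_eq, SemidirectProduct.mul_left, Pi.mul_apply] at hi
      by_contra h
      simp only [Set.mem_union, Set.mem_setOf_eq, Set.mem_image, not_or, not_exists,
        not_and, not_not] at h
      obtain ⟨h1, h2⟩ := h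
      apply hi
      have hb : b.left (a.right⁻¹ i) = 1 := by
        by_contra hc
        exact h2 (a.right⁻¹ i) hc (by simp)
      have hrfl : (permAction Γ a.right b.left) i = b.left (a.right⁻¹ i) := rfl
      rw [h1, one_mul, hrfl, hb]
  inv_mem' := by
    rintro a ⟨ha1, ha2⟩
    constructor
    · refine Set.Finite.subset ha1 fun i hi => ?_
      simp only [Set.mem_setOf_eq, SemidirectProduct.inv_right] at hi ⊢
      intro h
      exact hi (Equiv.Perm.inv_eq_iff_eq.mpr h.symm)
    · refine Set.Finite.subset (Set.Finite.preimage (a.right.injective.injOn) ha2)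
        fun i hi => ?_
      simp only [Set.mem_setOf_eq] at hi
      simp only [Set.mem_preimage, Set.mem_setOf_eq]
      intro h
      apply hi
      have hrfl : (a⁻¹).left i = (a.left (a.right i))⁻¹ := rfl
      rw [hrfl, h, inv_one]

theorem mem_WG {Γ : Type*} [Group Γ] (g : W Γ) :
    g ∈ WG Γ ↔ {i | g.right i ≠ i}.Finite ∧ {i | g.left i ≠ 1}.Finite := Iff.rfl

/-- The canonical copy of `𝔖∞` inside `Γ ≀ 𝔖∞`. -/
def permW {Γ : Type*} [Group Γ] (s : SInf) : WG Γ :=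
  ⟨SemidirectProduct.inr s.1, by
    rw [mem_WG]
    constructor
    · have h : (SemidirectProduct.inr s.1 : W Γ).right = s.1 := SemidirectProduct.right_inr _
      rw [h]
      exact s.2
    · convert Set.finite_empty using 1
      ext i; simp⟩

/-- The canonical copy of `Γ^∞_e` inside `Γ ≀ 𝔖∞`. -/
def seqW {Γ : Type*} [Group Γ] (γ : GammaE Γ) : WG Γ :=
  ⟨SemidirectProduct.inl γ.1, by
    rw [mem_WG]
    constructor
    · convert Set.finite_empty using 1
      ext i; simp
    · have h : (SemidirectProduct.inl γ.1 : W Γ).left = γ.1 := SemidirectProduct.left_inl _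
      rw [h]
      exact γ.2⟩

/-- The support of an element of `Γ ≀ 𝔖∞`. -/
def supp {Γ : Type*} [Group Γ] (g : WG Γ) : Set ℕ :=
  {i | (g : W Γ).right i ≠ i ∨ (g : W Γ).left i ≠ 1}

/-- Positive definiteness of a function on a group. -/
def IsPosDef {G : Type*} [Group G] (φ : G → ℂ) : Prop :=
  ∀ (m : ℕ) (g : Fin m → G) (c : Fin m → ℂ),
    0 ≤ ∑ i, ∑ j, c i * (starRingEnd ℂ) (c j) * φ ((g j)⁻¹ * g i)

/-- A state on a group: normalized positive definite function. -/
def IsState {G : Type*} [Group G] (φ : G → ℂ) : Prop := φ 1 = 1 ∧ IsPosDef φ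

/-- `𝔖∞`-centrality of a function on `Γ ≀ 𝔖∞`. -/
def IsSCentral {Γ : Type*} [Group Γ] (φ : WG Γ → ℂ) : Prop :=
  ∀ (s : SInf) (g : WG Γ), φ (permW s * g * (permW s)⁻¹) = φ g

/-- The commutant of a set of bounded operators. -/
def commutant {H : Type*} [NormedAddCommGroup H] [InnerProductSpace ℂ H]
    (S : Set (H →L[ℂ] H)) : Set (H →L[ℂ] H) := {T | ∀ A ∈ S, T * A = A * T}

variable {Γ : Type*} [Group Γ]
variable {H : Type*} [NormedAddCommGroup H] [InnerProductSpace ℂ H] [CompleteSpace H]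

/-- The image set `π(G)` of a representation. -/
def repSet (π : WG Γ →* (H →L[ℂ] H)) : Set (H →L[ℂ] H) := Set.range fun g : WG Γ => π g

/-- The von Neumann algebra `π(G)''` (double commutant). -/
def vN (π : WG Γ →* (H →L[ℂ] H)) : Set (H →L[ℂ] H) := commutant (commutant (repSet π))

/-- The representation is factorial: the center `π(G)' ∩ π(G)''` consists of scalars. -/
def IsFactorial (π : WG Γ →* (H →L[ℂ] H)) : Prop :=
  ∀ T ∈ commutant (repSet π) ∩ vN π, ∃ c : ℂ, T = c • (1 : H →L[ℂ] H)

/-- `(π, H, ξ)` is a GNS triple for `φ`. -/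
structure IsGNS (φ : WG Γ → ℂ) (π : WG Γ →* (H →L[ℂ] H)) (ξ : H) : Prop where
  unitary : ∀ g, π g ∈ unitary (H →L[ℂ] H)
  norm_one : ‖ξ‖ = 1
  cyclic : Dense ((Submodule.span ℂ (Set.range fun g : WG Γ => π g ξ) : Submodule ℂ H) : Set H)
  inner_eq : ∀ g, φ g = ⟪ξ, π g ξ⟫

theorem swap_mem_SInf (a b : ℕ) : Equiv.swap a b ∈ SInf := by
  rw [mem_SInf]
  refine Set.Finite.subset ((Set.finite_singleton a).insert b) fun i hi => ?_
  simp only [Set.mem_setOf_eq] at hi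
  simp only [Set.mem_insert_iff, Set.mem_singleton_iff]
  by_contra h
  push_neg at h
  exact hi (Equiv.swap_apply_of_ne_of_ne h.2 h.1)

/-- The transposition `(a b)` as an element of `Γ ≀ 𝔖∞`. -/
def swapW {Γ : Type*} [Group Γ] (a b : ℕ) : WG Γ := permW ⟨Equiv.swap a b, swap_mem_SInf a b⟩

def omegaFun (n i : ℕ) : ℕ := if i < n then i + n else if i < 2 * n then i - n else i

theorem omegaFun_invol (n i : ℕ) : omegaFun n (omegaFun n i) = i := by
  unfold omegaFun
  split_ifs <;> first | contradiction | omega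

/-- Olshanski's permutation `ω_n`. -/
def omegaPerm (n : ℕ) : Equiv.Perm ℕ :=
  ⟨omegaFun n, omegaFun n, omegaFun_invol n, omegaFun_invol n⟩

theorem omegaPerm_mem (n : ℕ) : omegaPerm n ∈ SInf := by
  rw [mem_SInf]
  refine Set.Finite.subset (Set.finite_Iio (2 * n)) fun i hi => ?_
  simp only [Set.mem_setOf_eq] at hi
  simp only [Set.mem_Iio]
  by_contra h
  push_neg at h
  apply hi
  show omegaFun n i = i
  unfold omegaFun
  split_ifs <;> first | contradiction | omega

/-- `ω_n` as an element of `Γ ≀ 𝔖∞`. -/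
def omegaW {Γ : Type*} [Group Γ] (n : ℕ) : WG Γ := permW ⟨omegaPerm n, omegaPerm_mem n⟩

def sigmaFun (n i : ℕ) : ℕ := if i + 1 < n then i + 1 else if i + 1 = n then 0 else i

def sigmaInvFun (n i : ℕ) : ℕ := if i < n then (if i = 0 then n - 1 else i - 1) else i

theorem sigma_left_inv (n i : ℕ) : sigmaInvFun n (sigmaFun n i) = i := by
  unfold sigmaFun sigmaInvFun
  split_ifs <;> first | contradiction | omega

theorem sigma_right_inv (n i : ℕ) : sigmaFun n (sigmaInvFun n i) = i := by
  unfold sigmaFun sigmaInvFun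
  split_ifs <;> first | contradiction | omega

/-- The cycle `σ_n = (0 1 2 ... n-1)`. -/
def sigmaPerm (n : ℕ) : Equiv.Perm ℕ :=
  ⟨sigmaFun n, sigmaInvFun n, sigma_left_inv n, sigma_right_inv n⟩

theorem sigmaPerm_mem (n : ℕ) : sigmaPerm n ∈ SInf := by
  rw [mem_SInf]
  refine Set.Finite.subset (Set.finite_Iio n) fun i hi => ?_
  simp only [Set.mem_setOf_eq] at hi
  simp only [Set.mem_Iio]
  by_contra h
  push_neg at h
  apply hi
  show sigmaFun n i = i
  unfold sigmaFun
  split_ifs <;> first | contradiction | omega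

/-- The cycle of `s` through the point `i` (the paper's `s_p` for the orbit `p` of `i`). -/
def cycleAt (s : Equiv.Perm ℕ) (i : ℕ) : Equiv.Perm ℕ where
  toFun j := if s.SameCycle i j then s j else j
  invFun j := if s.SameCycle i j then s⁻¹ j else j
  left_inv j := by
    by_cases h : s.SameCycle i j
    · have h2 : s.SameCycle i (s j) := Equiv.Perm.sameCycle_apply_right.mpr h
      simp [h, h2]
    · simp [h]
  right_inv j := by
    by_cases h : s.SameCycle i j
    · have h2 : s.SameCycle i (s⁻¹ j) := Equiv.Perm.sameCycle_symm_apply_right.mpr h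
      simp [h, h2]
    · simp [h]

theorem cycleAt_mem {s : Equiv.Perm ℕ} (hs : s ∈ SInf) (i : ℕ) : cycleAt s i ∈ SInf := by
  rw [mem_SInf] at hs ⊢
  refine Set.Finite.subset hs fun j hj => ?_
  simp only [Set.mem_setOf_eq] at hj ⊢
  intro h
  apply hj
  show (if s.SameCycle i j then s j else j) = j
  split_ifs with hc
  · exact h
  · rfl

/-- The generalized cycle of `g = sγ` corresponding to the orbit of `i` under `s`. -/
def genCycle {Γ : Type*} [Group Γ] (g : WG Γ) (i : ℕ) : WG Γ :=
  permW ⟨cycleAt (g : W Γ).right i, cycleAt_mem g.2.1 i⟩ *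
  seqW ⟨fun k => if ((g : W Γ).right).SameCycle i k then (g : W Γ).left ((g : W Γ).right k)
      else 1, by
    rw [mem_GammaE]
    refine Set.Finite.subset (Set.Finite.preimage ((g : W Γ).right.injective.injOn) g.2.2)
      fun k hk => ?_
    simp only [Set.mem_setOf_eq] at hk
    simp only [Set.mem_preimage, Set.mem_setOf_eq]
    by_cases hsc : ((g : W Γ).right).SameCycle i k
    · rw [if_pos hsc] at hk; exact hk
    · rw [if_neg hsc] at hk; exact absurd rfl hk⟩

/-- The von Neumann algebra `𝔄_j` generated by `O_j` and the `π(γ)` with `γ` supported at `j`. -/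
def Aj (π : WG Γ →* (H →L[ℂ] H)) (O : H →L[ℂ] H) (j : ℕ) : Set (H →L[ℂ] H) :=
  commutant (commutant
    ({O} ∪ {T | ∃ γ : GammaE Γ, (∀ i, i ≠ j → (γ : ℕ → Γ) i = 1) ∧ T = π (seqW γ)}))


/-!
Let `g` be supported in `[0, N)` and let `gₙ` be its conjugate by the permutation exchanging
`[0, N)` with the block `[N(n+1), N(n+2))`. For fixed `q, h ∈ G` the matrix coefficient
`⟪π q ξ, π gₙ (π h ξ)⟫ = φ (q⁻¹ gₙ h)` is eventually constant: for large `n`, `gₙ` commutes with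
`h`, and a block swap fixing the support of `q⁻¹ h` carries `gₙ` to `gₘ`, which `φ` does not see
since it is `𝔖∞`-central. As `ξ` is cyclic, `π gₙ` converges in the weak operator topology to
some `T`. Being a weak limit of elements of `π(G)` that eventually commute with each fixed
`π h`, `T` lies in the centre of `π(G)''`. Each `φₖ` is constant along `π gₙ` by the trace
property and continuous along it by normality, so `φₖ (π g) = φₖ T`, and these agree for
`k = 1, 2` by hypothesis.
-/

theorem mem_supp {g : WG Γ} {i : ℕ} :
    i ∈ supp g ↔ (g : W Γ).right i ≠ i ∨ (g : W Γ).left i ≠ 1 := Iff.rfl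

theorem notMem_supp {g : WG Γ} {i : ℕ} :
    i ∉ supp g ↔ (g : W Γ).right i = i ∧ (g : W Γ).left i = 1 := by
  simp [mem_supp]

theorem supp_finite (g : WG Γ) : (supp g).Finite := g.2.1.union g.2.2

theorem exists_supp_subset_Iio (g : WG Γ) : ∃ N, 0 < N ∧ supp g ⊆ Set.Iio N := by
  obtain ⟨M, hM⟩ := (supp_finite g).bddAbove
  exact ⟨M + 1, M.succ_pos, fun i hi => Nat.lt_succ_of_le (hM hi)⟩

theorem mul_left_apply (a b : W Γ) (i : ℕ) :
    (a * b).left i = a.left i * b.left (a.right⁻¹ i) := rfl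

theorem right_inv_apply_eq_or_mem_supp (g : WG Γ) (i : ℕ) :
    (g : W Γ).right⁻¹ i = i ∨ (g : W Γ).right⁻¹ i ∈ supp g := by
  by_cases h : (g : W Γ).right⁻¹ i = i
  · exact Or.inl h
  · exact Or.inr (Or.inl (by simpa using Ne.symm h))

theorem mul_left_apply_of_notMem_supp {g h : WG Γ} (hgh : Disjoint (supp g) (supp h)) {i : ℕ}
    (hi : i ∉ supp g) :
    ((g * h : WG Γ) : W Γ).left i = (h : W Γ).left i ∧
      ((h * g : WG Γ) : W Γ).left i = (h : W Γ).left i := by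
  obtain ⟨hr, hl⟩ := notMem_supp.1 hi
  have hr' : (g : W Γ).right⁻¹ i = i := Equiv.Perm.inv_eq_iff_eq.2 hr.symm
  have hh : (h : W Γ).right⁻¹ i ∉ supp g := by
    rcases right_inv_apply_eq_or_mem_supp h i with h1 | h1
    · rwa [h1]
    · exact Set.disjoint_right.1 hgh h1
  simp only [Subgroup.coe_mul, mul_left_apply, hl, hr', (notMem_supp.1 hh).2, one_mul, mul_one,
    and_self]

theorem commute_of_disjoint_supp {g h : WG Γ} (hgh : Disjoint (supp g) (supp h)) :
    Commute g h := by
  apply Subtype.ext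
  apply SemidirectProduct.ext
  · funext i
    by_cases hi : i ∈ supp g
    · obtain ⟨h1, h2⟩ := mul_left_apply_of_notMem_supp hgh.symm (Set.disjoint_left.1 hgh hi)
      exact h2.trans h1.symm
    · obtain ⟨h1, h2⟩ := mul_left_apply_of_notMem_supp hgh hi
      exact h1.trans h2.symm
  · refine Equiv.Perm.Disjoint.commute fun i => ?_
    by_cases hi : i ∈ supp g
    · exact Or.inr (notMem_supp.1 (Set.disjoint_left.1 hgh hi)).1
    · exact Or.inl (notMem_supp.1 hi).1

theorem permW_mul (s t : SInf) : (permW (s * t) : WG Γ) = permW s * permW t := by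
  apply Subtype.ext
  simp [permW]

theorem conj_permW_right (s : SInf) (g : WG Γ) :
    (MulAut.conj (permW s) g : W Γ).right = s.1 * (g : W Γ).right * s.1⁻¹ := by
  simp [permW]

theorem conj_permW_left (s : SInf) (g : WG Γ) (i : ℕ) :
    (MulAut.conj (permW s) g : W Γ).left i = (g : W Γ).left (s.1⁻¹ i) := by
  simp [permW, mul_left_apply]

theorem supp_permW (s : SInf) : supp (permW s : WG Γ) = {i | s.1 i ≠ i} := by
  ext i
  simp [mem_supp, permW]

theorem supp_conj_permW (s : SInf) (g : WG Γ) :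
    supp (MulAut.conj (permW s) g) = s.1 '' supp g := by
  ext i
  rw [Set.mem_image_equiv, mem_supp, mem_supp, conj_permW_right, conj_permW_left]
  simp [Equiv.Perm.inv_def, ← Equiv.eq_symm_apply]

theorem conj_permW_eq_self {s : SInf} {g : WG Γ} (hs : ∀ i ∈ supp g, s.1 i = i) :
    MulAut.conj (permW s) g = g := by
  have hcomm : Commute (permW s) g := commute_of_disjoint_supp <| by
    rw [supp_permW]
    exact Set.disjoint_left.2 fun i hi hg => hi (hs i hg)
  rw [MulAut.conj_apply, hcomm.eq, mul_inv_cancel_right]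

theorem conj_permW_eq_of_eqOn {u v : SInf} {g : WG Γ} (huv : Set.EqOn u.1 v.1 (supp g)) :
    MulAut.conj (permW u) g = MulAut.conj (permW v) g := by
  have hfix : MulAut.conj (permW (v⁻¹ * u)) g = g :=
    conj_permW_eq_self fun i hi => by simp [huv hi]
  calc MulAut.conj (permW u) g = MulAut.conj (permW (v * (v⁻¹ * u))) g := by
        rw [mul_inv_cancel_left]
    _ = MulAut.conj (permW v) g := by rw [permW_mul, map_mul, MulAut.mul_apply, hfix]

-- Exchanges the blocks `[a, a + N)` and `[b, b + N)`; the identity unless `a + N ≤ b`.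
def blockSwapFun (N a b i : ℕ) : ℕ :=
  if a + N ≤ b ∧ a ≤ i ∧ i < a + N then i - a + b
  else if a + N ≤ b ∧ b ≤ i ∧ i < b + N then i - b + a else i

theorem blockSwapFun_involutive (N a b : ℕ) : Function.Involutive (blockSwapFun N a b) := by
  intro i
  unfold blockSwapFun
  split_ifs <;> omega

def blockSwap (N a b : ℕ) : SInf :=
  ⟨(blockSwapFun_involutive N a b).toPerm, (Set.finite_Iio (b + N)).subset fun i hi => by
    by_contra hle
    rw [Set.mem_Iio, not_lt] at hle
    refine hi ?_
    simp only [Function.Involutive.coe_toPerm, blockSwapFun]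
    split_ifs <;> omega⟩

theorem blockSwap_apply (N a b i : ℕ) : (blockSwap N a b).1 i = blockSwapFun N a b i := rfl

theorem blockSwap_apply_add {N a b i : ℕ} (hab : a + N ≤ b) (hi : i < N) :
    (blockSwap N a b).1 (a + i) = b + i := by
  rw [blockSwap_apply, blockSwapFun]
  split_ifs <;> omega

theorem blockSwap_apply_of_lt {N a b i : ℕ} (hi : i < a) : (blockSwap N a b).1 i = i := by
  rw [blockSwap_apply, blockSwapFun]
  split_ifs <;> omega

def blockConj (g : WG Γ) (N n : ℕ) : WG Γ :=
  MulAut.conj (permW (blockSwap N 0 (N * (n + 1)))) g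

section blockConj

variable {g : WG Γ} {N : ℕ}

theorem supp_blockConj_subset (hg : supp g ⊆ Set.Iio N) (n : ℕ) :
    supp (blockConj g N n) ⊆ Set.Ici (N * (n + 1)) := by
  rw [blockConj, supp_conj_permW]
  rintro _ ⟨i, hi, rfl⟩
  have hi : i < N := hg hi
  rw [← zero_add i, blockSwap_apply_add (by nlinarith) hi]
  exact Nat.le_add_right _ _

theorem conj_blockSwap_blockConj (hg : supp g ⊆ Set.Iio N) {n m : ℕ} (hnm : n < m) :
    MulAut.conj (permW (blockSwap N (N * (n + 1)) (N * (m + 1)))) (blockConj g N n) =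
      blockConj g N m := by
  rw [blockConj, blockConj, ← MulAut.mul_apply, ← map_mul, ← permW_mul]
  refine conj_permW_eq_of_eqOn fun i hi => ?_
  have hi : i < N := hg hi
  have hnN : N ≤ N * (n + 1) := by nlinarith
  have hnm : N * (n + 1) + N ≤ N * (m + 1) := by nlinarith
  rw [Subgroup.coe_mul, Equiv.Perm.mul_apply, ← zero_add i, blockSwap_apply_add (by omega) hi,
    blockSwap_apply_add hnm hi, blockSwap_apply_add (by omega) hi]

theorem eventually_commute_blockConj (hg : supp g ⊆ Set.Iio N) (hN : 0 < N) (h : WG Γ) :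
    ∀ᶠ n in atTop, Commute (blockConj g N n) h := by
  obtain ⟨M, -, hM⟩ := exists_supp_subset_Iio h
  refine eventually_atTop.2 ⟨M, fun n hn => commute_of_disjoint_supp ?_⟩
  refine Set.disjoint_left.2 fun i hi hi' => ?_
  have h1 : N * (n + 1) ≤ i := supp_blockConj_subset hg n hi
  have h2 : i < M := hM hi'
  nlinarith

theorem exists_eventually_apply_mul_blockConj_eq {φ : WG Γ → ℂ} (hφ : IsSCentral φ)
    (hg : supp g ⊆ Set.Iio N) (hN : 0 < N) (k : WG Γ) :
    ∃ c, ∀ᶠ n in atTop, φ (k * blockConj g N n) = c := by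
  obtain ⟨M, -, hM⟩ := exists_supp_subset_Iio k
  refine ⟨φ (k * blockConj g N M), eventually_atTop.2 ⟨M, fun n hn => ?_⟩⟩
  rcases hn.eq_or_lt with rfl | hlt
  · rfl
  set ρ := blockSwap N (N * (M + 1)) (N * (n + 1))
  have hk : MulAut.conj (permW ρ) k = k := conj_permW_eq_self fun i hi => by
    have : i < M := hM hi
    exact blockSwap_apply_of_lt (by nlinarith)
  calc φ (k * blockConj g N n) = φ (MulAut.conj (permW ρ) (k * blockConj g N M)) := by
        rw [map_mul, hk, conj_blockSwap_blockConj hg hlt]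
    _ = φ (k * blockConj g N M) := hφ _ _

theorem exists_eventually_apply_mul_blockConj_mul_eq {φ : WG Γ → ℂ} (hφ : IsSCentral φ)
    (hg : supp g ⊆ Set.Iio N) (hN : 0 < N) (q h : WG Γ) :
    ∃ c, ∀ᶠ n in atTop, φ (q * blockConj g N n * h) = c := by
  obtain ⟨c, hc⟩ := exists_eventually_apply_mul_blockConj_eq hφ hg hN (q * h)
  refine ⟨c, (hc.and (eventually_commute_blockConj hg hN h)).mono fun n ⟨hn, hcomm⟩ => ?_⟩
  rw [mul_assoc, hcomm.eq, ← mul_assoc, hn]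

end blockConj

section BoundedFamily

variable {𝕜 𝕜₂ X F : Type*} [NontriviallyNormedField 𝕜] [NontriviallyNormedField 𝕜₂]
  {σ : 𝕜 →+* 𝕜₂} [RingHomIsometric σ] [NormedAddCommGroup X] [NormedSpace 𝕜 X]
  [NormedAddCommGroup F] [NormedSpace 𝕜₂ F] {f : ℕ → X →SL[σ] F} {C : ℝ}

theorem isClosed_setOf_cauchySeq_apply (hf : ∀ n x, ‖f n x‖ ≤ C * ‖x‖) :
    IsClosed {x | CauchySeq (f · x)} := by
  -- Cauchy means `(f p.1 - f p.2) x → 0` along `ℕ × ℕ`, and this family is equicontinuous.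
  have hbound : ∃ C', ∀ (p : ℕ × ℕ) x, ‖f p.1 x - f p.2 x‖ ≤ C' * ‖x‖ :=
    ⟨2 * C, fun p x => by linarith [norm_sub_le (f p.1 x) (f p.2 x), hf p.1 x, hf p.2 x]⟩
  have hequi : Equicontinuous fun p : ℕ × ℕ => ⇑(f p.1 - f p.2) :=
    ((NormedSpace.equicontinuous_TFAE fun p : ℕ × ℕ => f p.1 - f p.2).out 3 1).1 hbound
  have hcauchy : ∀ x, CauchySeq (f · x) ↔
      Tendsto (fun p : ℕ × ℕ => (f p.1 - f p.2) x) atTop (𝓝 0) := fun x => by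
    simp_rw [cauchySeq_iff_tendsto_dist_atTop_0, dist_eq_norm]
    exact tendsto_zero_iff_norm_tendsto_zero.symm
  simp_rw [hcauchy]
  exact hequi.isClosed_setOfPred_tendsto (f := fun _ => 0) continuous_const

theorem exists_tendsto_apply_of_dense_span [CompleteSpace F] (hf : ∀ n x, ‖f n x‖ ≤ C * ‖x‖)
    {s : Set X} (hs : Dense (Submodule.span 𝕜 s : Set X))
    (h : ∀ x ∈ s, ∃ L, Tendsto (f · x) atTop (𝓝 L)) (x : X) :
    ∃ L, Tendsto (f · x) atTop (𝓝 L) := by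
  let V : Submodule 𝕜 X :=
    { carrier := {x | CauchySeq (f · x)}
      add_mem' := fun {a b} ha hb => by
        show CauchySeq fun n => f n (a + b)
        simp only [map_add]
        exact ha.add hb
      zero_mem' := by simpa using cauchySeq_const (0 : F)
      smul_mem' := fun c x hx => by
        show CauchySeq fun n => f n (c • x)
        simp only [map_smulₛₗ]
        exact (uniformContinuous_const_smul (σ c)).comp_cauchySeq hx }
  have hspan : Submodule.span 𝕜 s ≤ V :=
    Submodule.span_le.2 fun x hx => (h x hx).elim fun _ hL => hL.cauchySeq
  have hV : (V : Set X) = Set.univ :=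
    Set.eq_univ_of_univ_subset <| hs.closure_eq ▸
      (isClosed_setOf_cauchySeq_apply hf).closure_subset_iff.2 hspan
  exact cauchySeq_tendsto_of_complete (show x ∈ (V : Set X) by rw [hV]; exact Set.mem_univ x)

end BoundedFamily

section WeakLimit

variable {E : Type*} [NormedAddCommGroup E] [InnerProductSpace ℂ E] {A : ℕ → E →L[ℂ] E} {C : ℝ}

theorem norm_inner_apply_le {B : E →L[ℂ] E} (hB : ∀ x, ‖B x‖ ≤ C * ‖x‖) (x y : E) :
    ‖⟪x, B y⟫‖ ≤ C * ‖x‖ * ‖y‖ :=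
  (norm_inner_le_norm x (B y)).trans <| by
    nlinarith [mul_le_mul_of_nonneg_left (hB y) (norm_nonneg x)]

theorem exists_tendsto_inner_of_dense_span (hA : ∀ n x, ‖A n x‖ ≤ C * ‖x‖) {s : Set E}
    (hs : Dense (Submodule.span ℂ s : Set E))
    (h : ∀ x ∈ s, ∀ y ∈ s, ∃ L, Tendsto (fun n => ⟪x, A n y⟫) atTop (𝓝 L)) (x y : E) :
    ∃ L, Tendsto (fun n => ⟪x, A n y⟫) atTop (𝓝 L) := by
  have hright : ∀ x ∈ s, ∀ y, ∃ L, Tendsto (fun n => ⟪x, A n y⟫) atTop (𝓝 L) := fun x hx =>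
    exists_tendsto_apply_of_dense_span (f := fun n => (innerSL ℂ x).comp (A n))
      (fun n w => by simpa using norm_inner_apply_le (hA n) x w) hs (h x hx)
  exact exists_tendsto_apply_of_dense_span (f := fun n => innerSLFlip ℂ (A n y))
    (C := C * ‖y‖) (fun n v => by
      rw [innerSLFlip_apply_apply]
      linarith [norm_inner_apply_le (hA n) v y]) hs (fun x hx => hright x hx y) x

theorem exists_weakOperatorLimit [CompleteSpace E] (hA : ∀ n x, ‖A n x‖ ≤ C * ‖x‖)
    (h : ∀ x y, ∃ L, Tendsto (fun n => ⟪x, A n y⟫) atTop (𝓝 L)) :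
    ∃ T : E →L[ℂ] E, ∀ x y, Tendsto (fun n => ⟪x, A n y⟫) atTop (𝓝 ⟪x, T y⟫) := by
  choose L hL using h
  have hbound : ∀ x y, ‖L x y‖ ≤ C * ‖x‖ * ‖y‖ := fun x y =>
    le_of_tendsto' (hL x y).norm fun n => norm_inner_apply_le (hA n) x y
  let B : E →L⋆[ℂ] E →L[ℂ] ℂ :=
    (LinearMap.mk₂'ₛₗ (starRingEnd ℂ) (RingHom.id ℂ) L
      (fun x x' y => tendsto_nhds_unique (hL _ _) <| by
        simpa only [inner_add_left] using (hL x y).add (hL x' y))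
      (fun c x y => tendsto_nhds_unique (hL _ _) <| by
        simpa only [inner_smul_left, smul_eq_mul] using (hL x y).const_mul (starRingEnd ℂ c))
      (fun x y y' => tendsto_nhds_unique (hL _ _) <| by
        simpa only [map_add, inner_add_right] using (hL x y).add (hL x y'))
      (fun c x y => tendsto_nhds_unique (hL _ _) <| by
        simpa only [map_smul, inner_smul_right, smul_eq_mul, RingHom.id_apply] using
          (hL x y).const_mul c)).mkContinuous₂ C hbound
  refine ⟨ContinuousLinearMap.adjoint (InnerProductSpace.continuousLinearMapOfBilin B),
    fun x y => ?_⟩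
  rw [ContinuousLinearMap.adjoint_inner_right, InnerProductSpace.continuousLinearMapOfBilin_apply]
  exact hL x y

theorem mul_comm_of_tendsto_inner [CompleteSpace E] {T : E →L[ℂ] E}
    (hT : ∀ x y, Tendsto (fun n => ⟪x, A n y⟫) atTop (𝓝 ⟪x, T y⟫)) {B : E →L[ℂ] E}
    (hB : ∀ᶠ n in atTop, A n * B = B * A n) : T * B = B * T := by
  ext y
  refine ext_inner_left ℂ fun x => tendsto_nhds_unique (hT x (B y)) ?_
  rw [mul_apply_eq_comp, ← ContinuousLinearMap.adjoint_inner_left]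
  refine (hT _ y).congr' (hB.mono fun n hn => ?_)
  rw [ContinuousLinearMap.adjoint_inner_left, ← mul_apply_eq_comp, ← hn, mul_apply_eq_comp]

theorem tendsto_tsum_inner_of_tendsto_inner (hA : ∀ n x, ‖A n x‖ ≤ C * ‖x‖) {T : E →L[ℂ] E}
    (hT : ∀ x y, Tendsto (fun n => ⟪x, A n y⟫) atTop (𝓝 ⟪x, T y⟫)) {x : ℕ → E}
    (hx : Summable fun k => ‖x k‖ ^ 2) :
    Tendsto (fun n => ∑' k, ⟪x k, A n (x k)⟫) atTop (𝓝 (∑' k, ⟪x k, T (x k)⟫)) :=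
  tendsto_tsum_of_dominated_convergence (hx.mul_left C) (fun k => hT _ _) <|
    Eventually.of_forall fun n k => (norm_inner_apply_le (hA n) _ _).trans_eq (by ring)

end WeakLimit

section Representation

variable {V : Type*} [NormedAddCommGroup V] [InnerProductSpace ℂ V] {π : WG Γ →* (V →L[ℂ] V)}

theorem inner_map_map_map [CompleteSpace V] (hπ : ∀ g, π g ∈ unitary (V →L[ℂ] V))
    (q g h : WG Γ) (ξ : V) : ⟪π q ξ, π g (π h ξ)⟫ = ⟪ξ, π (q⁻¹ * g * h) ξ⟫ := by
  have hq : π g (π h ξ) = π q (π (q⁻¹ * g * h) ξ) := by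
    simp only [← mul_apply_eq_comp, ← map_mul, mul_assoc, mul_inv_cancel_left]
  rw [hq, ContinuousLinearMap.inner_map_map_of_mem_unitary (hπ q)]

theorem repSet_subset_vN : repSet π ⊆ vN π := fun _ ha _ hT => (hT _ ha).symm

theorem apply_map_conj_permW {ψ : (V →L[ℂ] V) → ℂ}
    (hψ : ∀ s : SInf, ∀ a ∈ vN π, ψ (π (permW s) * a) = ψ (a * π (permW s))) (s : SInf)
    (g : WG Γ) : ψ (π (MulAut.conj (permW s) g)) = ψ (π g) := by
  have h := hψ s (π (g * (permW s)⁻¹)) (repSet_subset_vN ⟨_, rfl⟩)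
  rwa [← map_mul, ← map_mul, inv_mul_cancel_right, ← mul_assoc] at h

theorem mem_center_of_tendsto_inner [CompleteSpace V] {g : ℕ → WG Γ}
    (hg : ∀ h, ∀ᶠ n in atTop, Commute (g n) h) {T : V →L[ℂ] V}
    (hT : ∀ x y, Tendsto (fun n => ⟪x, π (g n) y⟫) atTop (𝓝 ⟪x, T y⟫)) :
    T ∈ commutant (repSet π) ∩ vN π := by
  refine ⟨?_, fun B hB => mul_comm_of_tendsto_inner hT
    (Eventually.of_forall fun n => (hB _ ⟨_, rfl⟩).symm)⟩
  rintro _ ⟨h, rfl⟩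
  exact mul_comm_of_tendsto_inner hT ((hg h).mono fun n hn => by rw [← map_mul, ← map_mul, hn.eq])

end Representation

theorem statement_0_general {Γ : Type*} [Group Γ] {H : Type*} [NormedAddCommGroup H]
    [InnerProductSpace ℂ H] [CompleteSpace H]
    (φ : WG Γ → ℂ) (hcentral : IsSCentral φ)
    (π : WG Γ →* (H →L[ℂ] H)) (ξ : H) (hGNS : IsGNS φ π ξ)
    (x₁ x₂ : ℕ → H)
    (hx₁ : Summable fun n => ‖x₁ n‖ ^ 2) (hx₂ : Summable fun n => ‖x₂ n‖ ^ 2)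
    (φ₁ φ₂ : (H →L[ℂ] H) → ℂ)
    (hφ₁ : ∀ a : H →L[ℂ] H, φ₁ a = ∑' n, ⟪x₁ n, a (x₁ n)⟫)
    (hφ₂ : ∀ a : H →L[ℂ] H, φ₂ a = ∑' n, ⟪x₂ n, a (x₂ n)⟫)
    (hi₁ : ∀ s : SInf, ∀ a ∈ vN π, φ₁ (π (permW s) * a) = φ₁ (a * π (permW s)))
    (hi₂ : ∀ s : SInf, ∀ a ∈ vN π, φ₂ (π (permW s) * a) = φ₂ (a * π (permW s)))
    (hii : ∀ c ∈ commutant (repSet π) ∩ vN π, φ₁ c = φ₂ c) :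
    ∀ g : WG Γ, φ₁ (π g) = φ₂ (π g) := by
  intro g
  obtain ⟨N, hN, hg⟩ := exists_supp_subset_Iio g
  set A : ℕ → H →L[ℂ] H := fun n => π (blockConj g N n)
  have hA : ∀ n x, ‖A n x‖ ≤ 1 * ‖x‖ := fun n x => by
    rw [one_mul, ContinuousLinearMap.norm_map_of_mem_unitary (hGNS.unitary _)]
  have hcoeff : ∀ x ∈ Set.range (π · ξ), ∀ y ∈ Set.range (π · ξ),
      ∃ L, Tendsto (fun n => ⟪x, A n y⟫) atTop (𝓝 L) := by
    rintro _ ⟨q, rfl⟩ _ ⟨h, rfl⟩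
    obtain ⟨c, hc⟩ := exists_eventually_apply_mul_blockConj_mul_eq hcentral hg hN q⁻¹ h
    refine ⟨c, tendsto_const_nhds.congr' (hc.mono fun n hn => ?_)⟩
    rw [← hn, hGNS.inner_eq, ← inner_map_map_map hGNS.unitary]
  obtain ⟨T, hT⟩ := exists_weakOperatorLimit hA
    (exists_tendsto_inner_of_dense_span hA hGNS.cyclic hcoeff)
  have hψ : ∀ (ψ : (H →L[ℂ] H) → ℂ) (x : ℕ → H), Summable (fun k => ‖x k‖ ^ 2) →
      (∀ a, ψ a = ∑' k, ⟪x k, a (x k)⟫) →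
      (∀ s : SInf, ∀ a ∈ vN π, ψ (π (permW s) * a) = ψ (a * π (permW s))) → ψ (π g) = ψ T := by
    intro ψ x hx hψx htr
    have hconst : ∀ n, ψ (π g) = ψ (A n) := fun n => (apply_map_conj_permW htr _ g).symm
    refine tendsto_nhds_unique (f := fun n => ψ (A n)) (l := atTop)
      (tendsto_const_nhds.congr hconst) ?_
    simpa only [← hψx] using tendsto_tsum_inner_of_tendsto_inner hA hT hx
  rw [hψ φ₁ x₁ hx₁ hφ₁ hi₁, hψ φ₂ x₂ hx₂ hφ₂ hi₂]
  exact hii T (mem_center_of_tendsto_inner (eventually_commute_blockConj hg hN) hT)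

theorem statement_0 {Γ : Type*} [Group Γ] {H : Type*} [NormedAddCommGroup H]
    [InnerProductSpace ℂ H] [CompleteSpace H]
    (φ : WG Γ → ℂ) (hstate : IsState φ) (hcentral : IsSCentral φ)
    (π : WG Γ →* (H →L[ℂ] H)) (ξ : H) (hGNS : IsGNS φ π ξ)
    (x₁ x₂ : ℕ → H)
    (hx₁ : Summable fun n => ‖x₁ n‖ ^ 2) (hx₂ : Summable fun n => ‖x₂ n‖ ^ 2)
    (φ₁ φ₂ : (H →L[ℂ] H) → ℂ)
    (hφ₁ : ∀ a : H →L[ℂ] H, φ₁ a = ∑' n, ⟪x₁ n, a (x₁ n)⟫)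
    (hφ₂ : ∀ a : H →L[ℂ] H, φ₂ a = ∑' n, ⟪x₂ n, a (x₂ n)⟫)
    (hi₁ : ∀ s : SInf, ∀ a ∈ vN π, φ₁ (π (permW s) * a) = φ₁ (a * π (permW s)))
    (hi₂ : ∀ s : SInf, ∀ a ∈ vN π, φ₂ (π (permW s) * a) = φ₂ (a * π (permW s)))
    (hii : ∀ c ∈ commutant (repSet π) ∩ vN π, φ₁ c = φ₂ c) :
    ∀ g : WG Γ, φ₁ (π g) = φ₂ (π g) :=
  statement_0_general φ hcentral π ξ hGNS x₁ x₂ hx₁ hx₂ φ₁ φ₂ hφ₁ hφ₂ hi₁ hi₂ hii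

end DN
end
end

section
/- Let φ : Γ → ℂ be a function with φ(e) = 1, and suppose π is a unitary representation of G = Γ≀𝔖∞ on a complex Hilbert space H with a cyclic unit vector ξ such that ⟨π(sγ)ξ, ξ⟩ = φ_reg(sγ) for all s ∈ 𝔖∞, γ ∈ Γ^∞_e. Let s_n ∈ 𝔖∞ be the transposition interchanging n and n+1. Then (π(s_n))_{n∈ℕ} is a nontrivial central sequence in π(G)″: (1) for every m ∈ π(G)″ and every x ∈ H, ‖(m·π(s_n) − π(s_n)·m)x‖ → 0 as n → ∞ (each π(s_n) is a self-adjoint unitary); and (2) there is no sequence (c_n) of complex numbers such that ‖(π(s_n) − c_n·I)x‖ → 0 for every x ∈ H. -/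
open scoped Classical ComplexOrder
open Filter Topology

noncomputable section

namespace DN

local notation "⟪" x ", " y "⟫" => @inner ℂ _ _ x y

variable {Γ : Type*} [Group Γ]
variable {H : Type*} [NormedAddCommGroup H] [InnerProductSpace ℂ H] [CompleteSpace H]

/-!
Because `φ_reg` is invariant under conjugation by `𝔖∞`, right translation `π(g)ξ ↦ π(g t)ξ` by
`t ∈ 𝔖∞` preserves inner products, so it extends to a contraction `R_t` lying in `π(G)'`.
Every `g ∈ G` commutes with `s_n` for large `n`, hence `π(s_n) - R_{s_n} → 0` strongly on the
dense span of the `π(g)ξ` and therefore everywhere. An `m ∈ π(G)''` commutes with `R_{s_n}`, so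
`m π(s_n) - π(s_n) m = m (π(s_n) - R_{s_n}) - (π(s_n) - R_{s_n}) m → 0` strongly.
Nontriviality: `φ_reg(s_n) = 0` says `π(s_n)ξ ⟂ ξ`, so `‖(π(s_n) - c)ξ‖ ≥ ‖ξ‖ = 1` for every `c`.
-/

section ContinuousLinearMap

variable {𝕜 E F : Type*}

theorem tendsto_apply_zero_of_dense_span [NontriviallyNormedField 𝕜] [SeminormedAddCommGroup E]
    [NormedSpace 𝕜 E] [NormedAddCommGroup F] [NormedSpace 𝕜 F] {ι : Type*} {l : Filter ι}
    {T : ι → E →L[𝕜] F} {C : ℝ} (hT : ∀ i, ‖T i‖ ≤ C) {s : Set E}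
    (hs : Dense (Submodule.span 𝕜 s : Set E)) (h : ∀ y ∈ s, Tendsto (T · y) l (𝓝 0)) (x : E) :
    Tendsto (T · x) l (𝓝 0) := by
  let S : Submodule 𝕜 E :=
    { carrier := {x | Tendsto (T · x) l (𝓝 0)}
      zero_mem' := by simpa using tendsto_const_nhds
      add_mem' := fun {x y} hx hy => by simpa using hx.add hy
      smul_mem' := fun c x hx => by simpa using hx.const_smul c }
  have hequi : Equicontinuous ((↑) ∘ T) :=
    ((NormedSpace.equicontinuous_TFAE T).out 5 1 :
      (∃ C, ∀ i, ‖T i‖ ≤ C) ↔ Equicontinuous ((↑) ∘ T)).mp ⟨C, hT⟩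
  have hS : IsClosed (S : Set E) :=
    hequi.isClosed_setOfPred_tendsto (f := fun _ => 0) continuous_const
  exact hS.closure_subset_iff.mpr (Submodule.span_le.mpr h) (hs x)

theorem tendsto_commutator_apply_zero [NormedField 𝕜] [SeminormedAddCommGroup E]
    [NormedSpace 𝕜 E] {ι : Type*} {l : Filter ι} {U R : ι → E →L[𝕜] E} {m : E →L[𝕜] E}
    (hmR : ∀ i, m * R i = R i * m) (hUR : ∀ x, Tendsto (fun i => (U i - R i) x) l (𝓝 0))
    (x : E) : Tendsto (fun i => (m * U i - U i * m) x) l (𝓝 0) := by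
  have key : ∀ i, (m * U i - U i * m) x = m ((U i - R i) x) - (U i - R i) (m x) := fun i => by
    have := congrArg (· x) (hmR i)
    simp only [mul_apply_eq_comp, sub_apply, map_sub] at this ⊢
    rw [this]; abel
  simpa only [key, Function.comp_def, map_zero, sub_zero] using
    ((m.continuous.tendsto 0).comp (hUR x)).sub (hUR (m x))

variable [RCLike 𝕜] [NormedAddCommGroup E] [InnerProductSpace 𝕜 E]
  [NormedAddCommGroup F] [InnerProductSpace 𝕜 F]

theorem inner_linearCombination_eq_of_inner_eq {ι : Type*} {v : ι → E} {w : ι → F}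
    (h : ∀ i j, inner 𝕜 (w i) (w j) = inner 𝕜 (v i) (v j)) (c d : ι →₀ 𝕜) :
    inner 𝕜 (Finsupp.linearCombination 𝕜 w c) (Finsupp.linearCombination 𝕜 w d) =
      inner 𝕜 (Finsupp.linearCombination 𝕜 v c) (Finsupp.linearCombination 𝕜 v d) := by
  simp only [Finsupp.linearCombination_apply, Finsupp.sum, sum_inner, inner_sum,
    inner_smul_left, inner_smul_right, h]

theorem exists_norm_le_one_apply_eq_of_inner_eq [CompleteSpace F] {ι : Type*} {v : ι → E}
    {w : ι → F} (h : ∀ i j, inner 𝕜 (w i) (w j) = inner 𝕜 (v i) (v j))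
    (hv : Dense (Submodule.span 𝕜 (Set.range v) : Set E)) :
    ∃ R : E →L[𝕜] F, ‖R‖ ≤ 1 ∧ ∀ i, R (v i) = w i := by
  have hnorm : ∀ c, ‖Finsupp.linearCombination 𝕜 w c‖ ≤ 1 * ‖Finsupp.linearCombination 𝕜 v c‖ :=
    fun c => by
      rw [one_mul, norm_eq_sqrt_re_inner (𝕜 := 𝕜), norm_eq_sqrt_re_inner (𝕜 := 𝕜),
        inner_linearCombination_eq_of_inner_eq h]
  have hdense : DenseRange (Finsupp.linearCombination 𝕜 v) := by
    rwa [DenseRange, ← LinearMap.coe_range, Finsupp.range_linearCombination]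
  refine ⟨_, LinearMap.opNorm_extendOfNorm_le hdense zero_le_one hnorm, fun i => ?_⟩
  simpa using LinearMap.extendOfNorm_eq hdense ⟨1, hnorm⟩ (Finsupp.single i 1)

theorem norm_le_norm_add_of_inner_eq_zero {x y : E} (h : inner 𝕜 x y = 0) : ‖x‖ ≤ ‖x + y‖ := by
  have := norm_add_sq_eq_norm_sq_add_norm_sq_of_inner_eq_zero x y h
  nlinarith [norm_nonneg x, norm_nonneg (x + y), mul_self_nonneg ‖y‖]

end ContinuousLinearMap

section UnitaryRepresentation

variable {G E : Type*} [Group G] [NormedAddCommGroup E] [InnerProductSpace ℂ E]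
  {π : G →* (E →L[ℂ] E)}

theorem map_apply_map_apply (g h : G) (x : E) : π g (π h x) = π (g * h) x := by
  rw [map_mul, mul_apply_eq_comp]

variable [CompleteSpace E]

theorem isSelfAdjoint_map_of_mul_self_eq_one {g : G} (hunit : π g ∈ unitary (E →L[ℂ] E))
    (hg : g * g = 1) : IsSelfAdjoint (π g) := by
  calc star (π g) = star (π g) * (π g * π g) := by rw [← map_mul, hg, map_one, mul_one]
    _ = π g := by rw [← mul_assoc, Unitary.star_mul_self_of_mem hunit, one_mul]

theorem inner_map_apply_map_apply (hunit : ∀ g, π g ∈ unitary (E →L[ℂ] E)) (g h : G)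
    (x y : E) : ⟪π g x, π h y⟫ = ⟪x, π (g⁻¹ * h) y⟫ := by
  rw [← ContinuousLinearMap.inner_map_map_of_mem_unitary (hunit g) x, map_apply_map_apply,
    mul_inv_cancel_left]

theorem norm_map_le_one (hunit : ∀ g, π g ∈ unitary (E →L[ℂ] E)) (g : G) : ‖π g‖ ≤ 1 :=
  ContinuousLinearMap.opNorm_le_bound _ zero_le_one fun x => by
    rw [ContinuousLinearMap.norm_map_of_mem_unitary (hunit g), one_mul]

theorem norm_le_norm_sub_smul_apply {U : E →L[ℂ] E} (hU : U ∈ unitary (E →L[ℂ] E)) {ξ : E}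
    (h : ⟪ξ, U ξ⟫ = 0) (c : ℂ) : ‖ξ‖ ≤ ‖(U - c • 1) ξ‖ := by
  have hsplit : (U - c • 1) ξ = U ξ + (-c) • ξ := by simp [sub_eq_add_neg]
  rw [← ContinuousLinearMap.norm_map_of_mem_unitary hU ξ, hsplit]
  exact norm_le_norm_add_of_inner_eq_zero <| by
    rw [inner_smul_right, inner_eq_zero_symm.mp h, mul_zero]

variable {ξ : E}

theorem exists_mem_commutant_apply_eq_map_mul (hunit : ∀ g, π g ∈ unitary (E →L[ℂ] E))
    (hcyclic : Dense ((Submodule.span ℂ (Set.range fun g => π g ξ) : Submodule ℂ E) : Set E))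
    {t : G} (ht : ∀ g, ⟪ξ, π (t * g * t⁻¹) ξ⟫ = ⟪ξ, π g ξ⟫) :
    ∃ R ∈ commutant (Set.range fun g => π g), ‖R‖ ≤ 1 ∧ ∀ g, R (π g ξ) = π (g * t) ξ := by
  have hinner : ∀ g h, ⟪π (g * t) ξ, π (h * t) ξ⟫ = ⟪π g ξ, π h ξ⟫ := fun g h => by
    rw [inner_map_apply_map_apply hunit, inner_map_apply_map_apply hunit, ← ht]
    congr 3
    group
  obtain ⟨R, hRnorm, hR⟩ := exists_norm_le_one_apply_eq_of_inner_eq hinner hcyclic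
  refine ⟨R, ?_, hRnorm, hR⟩
  rintro _ ⟨h, rfl⟩
  refine ContinuousLinearMap.ext_on hcyclic ?_
  rintro _ ⟨g, rfl⟩
  simp only [mul_apply_eq_comp, map_apply_map_apply, hR, mul_assoc]

variable {ι : Type*} {l : Filter ι}

theorem tendsto_commutator_apply_zero_of_eventually_commute
    (hunit : ∀ g, π g ∈ unitary (E →L[ℂ] E))
    (hcyclic : Dense ((Submodule.span ℂ (Set.range fun g => π g ξ) : Submodule ℂ E) : Set E))
    {t : ι → G} (hconj : ∀ i g, ⟪ξ, π (t i * g * (t i)⁻¹) ξ⟫ = ⟪ξ, π g ξ⟫)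
    (hcomm : ∀ g, ∀ᶠ i in l, Commute g (t i))
    {m : E →L[ℂ] E} (hm : m ∈ commutant (commutant (Set.range fun g => π g))) (x : E) :
    Tendsto (fun i => (m * π (t i) - π (t i) * m) x) l (𝓝 0) := by
  choose R hRcomm hRnorm hR using fun i => exists_mem_commutant_apply_eq_map_mul hunit hcyclic
    (hconj i)
  have hbound : ∀ i, ‖π (t i) - R i‖ ≤ 1 + 1 := fun i =>
    (norm_sub_le _ _).trans (add_le_add (norm_map_le_one hunit _) (hRnorm i))
  refine tendsto_commutator_apply_zero (fun i => hm _ (hRcomm i))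
    (tendsto_apply_zero_of_dense_span hbound hcyclic ?_) x
  rintro _ ⟨g, rfl⟩
  refine tendsto_const_nhds.congr' ?_
  filter_upwards [hcomm g] with i hi
  rw [sub_apply, hR, map_apply_map_apply, hi.eq, sub_self]

end UnitaryRepresentation

section WreathProduct

@[simp]
theorem permW_right (s : SInf) : (permW (Γ := Γ) s : W Γ).right = s := rfl

@[simp]
theorem permW_left (s : SInf) : (permW (Γ := Γ) s : W Γ).left = 1 := rfl

@[simp]
theorem seqW_right (γ : GammaE Γ) : (seqW γ : W Γ).right = 1 := rfl

@[simp]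
theorem seqW_left (γ : GammaE Γ) : (seqW γ : W Γ).left = γ := rfl

@[simp]
theorem permAction_apply (s : Equiv.Perm ℕ) (γ : ℕ → Γ) (i : ℕ) :
    permAction Γ s γ i = γ (s⁻¹ i) := rfl

theorem permW_inv (s : SInf) : (permW (Γ := Γ) s)⁻¹ = permW s⁻¹ :=
  Subtype.ext (map_inv SemidirectProduct.inr (s : Equiv.Perm ℕ)).symm

theorem exists_permW_mul_seqW_eq (g : WG Γ) : ∃ s γ, permW s * seqW γ = g := by
  refine ⟨⟨_, g.2.1⟩, ⟨fun i => (g : W Γ).left ((g : W Γ).right i),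
    g.2.2.preimage (g : W Γ).right.injective.injOn⟩, Subtype.ext (SemidirectProduct.ext ?_ ?_)⟩
  · funext i
    simp
  · simp

theorem swapW_mul_self (a b : ℕ) : swapW (Γ := Γ) a b * swapW a b = 1 :=
  Subtype.ext (SemidirectProduct.ext (by simp [swapW]) (by simp [swapW]))

theorem commute_swapW {g : WG Γ} {a b : ℕ} (ha : a ∉ supp g) (hb : b ∉ supp g) :
    Commute g (swapW a b) := by
  simp only [supp, Set.mem_ofPred_eq, not_or, not_not] at ha hb
  refine Subtype.ext (SemidirectProduct.ext ?_ ?_)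
  · funext i
    simp only [swapW, Subgroup.coe_mul, SemidirectProduct.mul_left, permW_left, permW_right,
      map_one, Pi.mul_apply, Pi.one_apply, mul_one, one_mul, permAction_apply, Equiv.swap_inv]
    rcases eq_or_ne i a with rfl | hia
    · rw [Equiv.swap_apply_left, ha.2, hb.2]
    rcases eq_or_ne i b with rfl | hib
    · rw [Equiv.swap_apply_right, ha.2, hb.2]
    · rw [Equiv.swap_apply_of_ne_of_ne hia hib]
  · simp [swapW, Equiv.mul_swap_eq_swap_mul, ha.1, hb.1]

theorem eventually_commute_swapW_succ (g : WG Γ) :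
    ∀ᶠ n in atTop, Commute g (swapW n (n + 1)) := by
  have h := (supp_finite g).eventually_cofinite_notMem
  rw [Nat.cofinite_eq_atTop] at h
  filter_upwards [h, (tendsto_add_atTop_nat 1).eventually h] with n hn hn1
  exact commute_swapW hn hn1

def phiReg (φ : Γ → ℂ) (g : WG Γ) : ℂ :=
  if (g : W Γ).right = 1 then ∏ᶠ k, φ ((g : W Γ).left k) else 0

variable (φ : Γ → ℂ)

theorem phiReg_permW_mul_seqW (s : SInf) (γ : GammaE Γ) :
    phiReg φ (permW s * seqW γ) =
      if (s : Equiv.Perm ℕ) = 1 then ∏ᶠ k, φ ((γ : ℕ → Γ) k) else 0 := by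
  by_cases hs : (s : Equiv.Perm ℕ) = 1 <;> simp [phiReg, hs]

theorem isSCentral_phiReg : IsSCentral (phiReg φ) := by
  intro s g
  by_cases hg : (g : W Γ).right = 1
  · simp only [phiReg, permW_inv, hg, Subgroup.coe_mul, InvMemClass.coe_inv,
      SemidirectProduct.mul_right, SemidirectProduct.mul_left, permW_left, permW_right, mul_one,
      mul_inv_cancel, if_true, one_mul, map_one, Pi.mul_apply, Pi.one_apply, permAction_apply,
      Equiv.Perm.coe_inv]
    exact finprod_comp_equiv (f := fun k => φ ((g : W Γ).left k)) (s : Equiv.Perm ℕ).symm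
  · simp [phiReg, permW_inv, hg]

theorem phiReg_swapW {a b : ℕ} (h : a ≠ b) : phiReg φ (swapW a b) = 0 := by
  simp [phiReg, swapW, h]

end WreathProduct

theorem inner_map_apply_eq_phiReg {E : Type*} [NormedAddCommGroup E] [InnerProductSpace ℂ E]
    {φ : Γ → ℂ} {π : WG Γ →* (E →L[ℂ] E)} {ξ : E}
    (hrep : ∀ (s : SInf) (γ : GammaE Γ),
      ⟪ξ, π (permW s * seqW γ) ξ⟫ =
        if (s : Equiv.Perm ℕ) = 1 then ∏ᶠ k, φ ((γ : ℕ → Γ) k) else 0) (g : WG Γ) :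
    ⟪ξ, π g ξ⟫ = phiReg φ g := by
  obtain ⟨s, γ, rfl⟩ := exists_permW_mul_seqW_eq g
  rw [hrep, phiReg_permW_mul_seqW]

theorem statement_4_general {Γ : Type*} [Group Γ] {H : Type*} [NormedAddCommGroup H]
    [InnerProductSpace ℂ H] [CompleteSpace H]
    (φ : Γ → ℂ)
    (π : WG Γ →* (H →L[ℂ] H)) (ξ : H)
    (hunit : ∀ g, π g ∈ unitary (H →L[ℂ] H))
    (hnorm : ‖ξ‖ = 1)
    (hcyclic :
      Dense ((Submodule.span ℂ (Set.range fun g : WG Γ => π g ξ) : Submodule ℂ H) : Set H))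
    (hrep : ∀ (s : SInf) (γ : GammaE Γ),
      ⟪ξ, π (permW s * seqW γ) ξ⟫ =
        if (s : Equiv.Perm ℕ) = 1 then ∏ᶠ k, φ ((γ : ℕ → Γ) k) else 0) :
    (∀ n : ℕ, IsSelfAdjoint (π (swapW n (n + 1)))) ∧
    (∀ m ∈ vN π, ∀ x : H,
      Tendsto (fun n => ‖(m * π (swapW n (n + 1)) - π (swapW n (n + 1)) * m) x‖)
        atTop (𝓝 0)) ∧
    ¬ ∃ c : ℕ → ℂ, ∀ x : H,
      Tendsto (fun n => ‖(π (swapW n (n + 1)) - c n • (1 : H →L[ℂ] H)) x‖) atTop (𝓝 0) := by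
  have hinner := inner_map_apply_eq_phiReg hrep
  refine ⟨fun n => isSelfAdjoint_map_of_mul_self_eq_one (hunit _) (swapW_mul_self n (n + 1)),
    fun m hm x => ?_, ?_⟩
  · refine tendsto_zero_iff_norm_tendsto_zero.mp <|
      tendsto_commutator_apply_zero_of_eventually_commute hunit hcyclic (fun n g => ?_)
        eventually_commute_swapW_succ hm x
    rw [hinner, hinner, swapW, isSCentral_phiReg]
  · rintro ⟨c, hc⟩
    have horth : ∀ n, ⟪ξ, π (swapW n (n + 1)) ξ⟫ = 0 := fun n => by
      rw [hinner, phiReg_swapW φ n.succ_ne_self.symm]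
    have hlower : ∀ n, ‖ξ‖ ≤ ‖(π (swapW n (n + 1)) - c n • (1 : H →L[ℂ] H)) ξ‖ := fun n =>
      norm_le_norm_sub_smul_apply (hunit _) (horth n) (c n)
    have := ge_of_tendsto' (hc ξ) hlower
    norm_num [hnorm] at this

theorem statement_4 {Γ : Type*} [Group Γ] {H : Type*} [NormedAddCommGroup H]
    [InnerProductSpace ℂ H] [CompleteSpace H]
    (φ : Γ → ℂ) (hφone : φ 1 = 1)
    (π : WG Γ →* (H →L[ℂ] H)) (ξ : H)
    (hunit : ∀ g, π g ∈ unitary (H →L[ℂ] H))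
    (hnorm : ‖ξ‖ = 1)
    (hcyclic :
      Dense ((Submodule.span ℂ (Set.range fun g : WG Γ => π g ξ) : Submodule ℂ H) : Set H))
    (hrep : ∀ (s : SInf) (γ : GammaE Γ),
      ⟪ξ, π (permW s * seqW γ) ξ⟫ =
        if (s : Equiv.Perm ℕ) = 1 then ∏ᶠ k, φ ((γ : ℕ → Γ) k) else 0) :
    (∀ n : ℕ, IsSelfAdjoint (π (swapW n (n + 1)))) ∧
    (∀ m ∈ vN π, ∀ x : H,
      Tendsto (fun n => ‖(m * π (swapW n (n + 1)) - π (swapW n (n + 1)) * m) x‖)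
        atTop (𝓝 0)) ∧
    ¬ ∃ c : ℕ → ℂ, ∀ x : H,
      Tendsto (fun n => ‖(π (swapW n (n + 1)) - c n • (1 : H →L[ℂ] H)) x‖) atTop (𝓝 0) :=
  statement_4_general φ π ξ hunit hnorm hcyclic hrep

end DN
end
end

section
/- Let K be a separable complex Hilbert space and let (a_n)_{n∈ℕ} be a bounded sequence of bounded linear operators on K that is a central sequence in B(K): for every bounded operator m on K and every x ∈ K, ‖(a_n·m − m·a_n)x‖ → 0 and ‖(a_n*·m − m·a_n*)x‖ → 0 as n → ∞. Then (a_n) is trivial: there exists a sequence (c_n) of complex numbers such that ‖(a_n − c_n·I)x‖ → 0 and ‖(a_n* − conj(c_n)·I)x‖ → 0 for every x ∈ K. -/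
open scoped Classical ComplexOrder
open Filter Topology

noncomputable section

namespace DN

local notation "⟪" x ", " y "⟫" => @inner ℂ _ _ x y

variable {Γ : Type*} [Group Γ]
variable {H : Type*} [NormedAddCommGroup H] [InnerProductSpace ℂ H] [CompleteSpace H]

open InnerProductSpace in
theorem commutator_rankOne_apply_of_norm_eq_one {𝕜 E : Type*} [RCLike 𝕜]
    [SeminormedAddCommGroup E] [InnerProductSpace 𝕜 E] (b : E →L[𝕜] E) {e : E}
    (he : ‖e‖ = 1) (x : E) :
    (b * rankOne 𝕜 x e - rankOne 𝕜 x e * b) e = (b - inner 𝕜 e (b e) • 1) x := by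
  simp [he]

theorem inner_adjoint_apply_self {𝕜 E : Type*} [RCLike 𝕜] [NormedAddCommGroup E]
    [InnerProductSpace 𝕜 E] [CompleteSpace E] (A : E →L[𝕜] E) (e : E) :
    inner 𝕜 e (A.adjoint e) = starRingEnd 𝕜 (inner 𝕜 e (A e)) := by
  rw [ContinuousLinearMap.adjoint_inner_right, inner_conj_symm]

theorem statement_5_general {K : Type*} [NormedAddCommGroup K] [InnerProductSpace ℂ K]
    [CompleteSpace K]
    (a : ℕ → (K →L[ℂ] K))
    (hcentral : ∀ (m : K →L[ℂ] K) (x : K),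
      Tendsto (fun n => ‖(a n * m - m * a n) x‖) atTop (𝓝 0) ∧
      Tendsto (fun n =>
        ‖(ContinuousLinearMap.adjoint (a n) * m - m * ContinuousLinearMap.adjoint (a n)) x‖)
        atTop (𝓝 0)) :
    ∃ c : ℕ → ℂ, ∀ x : K,
      Tendsto (fun n => ‖(a n - c n • (1 : K →L[ℂ] K)) x‖) atTop (𝓝 0) ∧
      Tendsto (fun n =>
        ‖(ContinuousLinearMap.adjoint (a n) - (starRingEnd ℂ) (c n) • (1 : K →L[ℂ] K)) x‖)
        atTop (𝓝 0) := by
  rcases subsingleton_or_nontrivial K with _ | _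
  · exact ⟨0, fun x => by simp [Subsingleton.elim x 0]⟩
  obtain ⟨e, he⟩ := exists_norm_eq K zero_le_one
  refine ⟨fun n => ⟪e, a n e⟫, fun x => ?_⟩
  obtain ⟨hcomm, hcomm_adj⟩ := hcentral (InnerProductSpace.rankOne ℂ x e) e
  constructor
  · simpa only [commutator_rankOne_apply_of_norm_eq_one _ he] using hcomm
  · simpa only [commutator_rankOne_apply_of_norm_eq_one _ he,
      inner_adjoint_apply_self] using hcomm_adj

theorem statement_5 {K : Type*} [NormedAddCommGroup K] [InnerProductSpace ℂ K]
    [CompleteSpace K] [TopologicalSpace.SeparableSpace K]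
    (a : ℕ → (K →L[ℂ] K)) (hbdd : ∃ C : ℝ, ∀ n, ‖a n‖ ≤ C)
    (hcentral : ∀ (m : K →L[ℂ] K) (x : K),
      Tendsto (fun n => ‖(a n * m - m * a n) x‖) atTop (𝓝 0) ∧
      Tendsto (fun n =>
        ‖(ContinuousLinearMap.adjoint (a n) * m - m * ContinuousLinearMap.adjoint (a n)) x‖)
        atTop (𝓝 0)) :
    ∃ c : ℕ → ℂ, ∀ x : K,
      Tendsto (fun n => ‖(a n - c n • (1 : K →L[ℂ] K)) x‖) atTop (𝓝 0) ∧
      Tendsto (fun n =>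
        ‖(ContinuousLinearMap.adjoint (a n) - (starRingEnd ℂ) (c n) • (1 : K →L[ℂ] K)) x‖)
        atTop (𝓝 0) :=
  statement_5_general a hcentral

end DN
end
end
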